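/- Let {a_n} be a sequence of positive real numbers such that for each digit d ∈ {1,...,9} the set {n ∈ ℕ : D(a_n) = d} is infinite. Then {a_n} is Benford distributed if and only if for every d ∈ {1,...,9}, the waiting times satisfy lim_{N→∞} (1/N)·Σ_{i≤N} w_i(d) = 1/P(d). -/

import Mathlib

open Filter

/-- `x` has leading digit `d` in base 10: `d·10^k ≤ x < (d+1)·10^k` for some integer `k`. -/
def HasLeadingDigit (x : ℝ) (d : ℕ) : Prop :=
  ∃ k : ℤ, (d : ℝ) * 10 ^ k ≤ x ∧ x < ((d : ℝ) + 1) * 10 ^ k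

/-- The Benford frequency `P(d) = log₁₀ (1 + 1/d)` of digit `d`. -/
noncomputable def benfordP (d : ℕ) : ℝ := Real.logb 10 (1 + 1 / (d : ℝ))

/-- A sequence is Benford distributed if for each digit `d ∈ {1,…,9}` the density of
indices `n` with `D(a_n) = d` equals `P(d)`. -/
def BenfordDistributed (a : ℕ → ℝ) : Prop :=
  ∀ d : ℕ, 1 ≤ d → d ≤ 9 →
    Tendsto
      (fun N : ℕ =>
        (Nat.card {n : ℕ | 1 ≤ n ∧ n ≤ N ∧ HasLeadingDigit (a n) d} : ℝ) / N)
      atTop (nhds (benfordP d))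

/-- A sequence is locally Benford distributed of order `k` if every `k`-tuple of digits
in `{1,…,9}` occurs among leading digits of `k` consecutive terms with density
`P(d₀)⋯P(d_{k-1})`. -/
def LocallyBenfordDistributed (a : ℕ → ℝ) (k : ℕ) : Prop :=
  ∀ d : Fin k → ℕ, (∀ i, 1 ≤ d i ∧ d i ≤ 9) →
    Tendsto
      (fun N : ℕ =>
        (Nat.card {n : ℕ | 1 ≤ n ∧ n ≤ N ∧
            ∀ i : Fin k, HasLeadingDigit (a (n + (i : ℕ))) (d i)} : ℝ) / N)
      atTop (nhds (∏ i : Fin k, benfordP (d i)))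

/-- `waitingTime a d i` is the waiting time `w_i(d) = n_{i+1}^{(d)} - n_i^{(d)}`, where
`n_1^{(d)} < n_2^{(d)} < ⋯` enumerates `{n ∈ ℕ, n ≥ 1 : D(a_n) = d}`
(the `j`-th element of this set, 1-indexed, being `Nat.nth · (j-1)`). -/
noncomputable def waitingTime (a : ℕ → ℝ) (d : ℕ) (i : ℕ) : ℕ :=
  Nat.nth (fun n => 1 ≤ n ∧ HasLeadingDigit (a n) d) i -
    Nat.nth (fun n => 1 ≤ n ∧ HasLeadingDigit (a n) d) (i - 1)

/-- A sequence has Benford distributed waiting times if for each digit `d ∈ {1,…,9}`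
the waiting times between occurrences of leading digit `d` take value `k` with density
`P(d)(1-P(d))^{k-1}`. -/
def BenfordWaitingTimes (a : ℕ → ℝ) : Prop :=
  ∀ d : ℕ, 1 ≤ d → d ≤ 9 → ∀ k : ℕ, 1 ≤ k →
    Tendsto
      (fun N : ℕ =>
        (Nat.card {i : ℕ | 1 ≤ i ∧ i ≤ N ∧ waitingTime a d i = k} : ℝ) / N)
      atTop (nhds (benfordP d * (1 - benfordP d) ^ (k - 1)))

/-- A sequence `u` of real numbers is uniformly distributed modulo 1. -/
def UniformlyDistributedMod1 (u : ℕ → ℝ) : Prop :=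
  ∀ t : ℝ, 0 ≤ t → t ≤ 1 →
    Tendsto
      (fun N : ℕ =>
        (Nat.card {n : ℕ | 1 ≤ n ∧ n ≤ N ∧ Int.fract (u n) ≤ t} : ℝ) / N)
      atTop (nhds t)

/-- `nthPrime n` is the `n`-th prime (1-indexed): `nthPrime 1 = 2`, `nthPrime 2 = 3`, … -/
noncomputable def nthPrime (n : ℕ) : ℕ := Nat.nth Nat.Prime (n - 1)

/-!
Let `n₁ < n₂ < ⋯` be the indices at which the leading digit is `d`. The waiting times telescope,
`w₁ + ⋯ + w_N = n_{N+1} - n₁`, so the average waiting time tends to `1/P(d)` exactly when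
`n_N / N → 1/P(d)`. The enumeration `N ↦ n_N` and the counting function
`N ↦ #{n ≤ N : D(aₙ) = d}` are inverse to each other up to one step, hence `n_N / N → 1/P(d)`
if and only if the counting density tends to `P(d)`.
-/

open Topology Asymptotics

lemma natCast_isEquivalent_natCast_add_one :
    (fun N : ℕ => (N : ℝ)) ~[atTop] fun N => (N : ℝ) + 1 :=
  isEquivalent_of_tendsto_one (tendsto_natCast_div_add_atTop (1 : ℝ))

lemma tendsto_div_add_one_iff {u : ℕ → ℝ} {L : ℝ} :
    Tendsto (fun N : ℕ => u N / (N + 1)) atTop (𝓝 L) ↔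
      Tendsto (fun N : ℕ => u N / N) atTop (𝓝 L) :=
  ((IsEquivalent.refl (u := u)).div natCast_isEquivalent_natCast_add_one.symm).tendsto_nhds_iff

lemma tendsto_succ_div_iff {u : ℕ → ℝ} {L : ℝ} :
    Tendsto (fun N : ℕ => u (N + 1) / N) atTop (𝓝 L) ↔
      Tendsto (fun N : ℕ => u N / N) atTop (𝓝 L) := by
  rw [← tendsto_div_add_one_iff, ← tendsto_add_atTop_iff_nat 1 (f := fun N : ℕ => u N / N)]
  simp only [Nat.cast_add, Nat.cast_one]

lemma tendsto_sub_const_div_iff {u : ℕ → ℝ} {c L : ℝ} :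
    Tendsto (fun N : ℕ => (u N - c) / N) atTop (𝓝 L) ↔
      Tendsto (fun N : ℕ => u N / N) atTop (𝓝 L) := by
  have hc := tendsto_const_div_atTop_nhds_zero_nat c
  simp only [sub_div]
  exact ⟨fun h => by simpa using h.add hc, fun h => by simpa using h.sub hc⟩

section NthCount

variable {p : ℕ → Prop} [DecidablePred p]

lemma tendsto_div_count_iff_tendsto_nth_div (hp : {n | p n}.Infinite) {L : ℝ} :
    Tendsto (fun n : ℕ => (n : ℝ) / Nat.count p n) atTop (𝓝 L) ↔
      Tendsto (fun k : ℕ => (Nat.nth p k : ℝ) / k) atTop (𝓝 L) := by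
  have hnth : Tendsto (Nat.nth p) atTop atTop :=
    tendsto_atTop_mono (fun _ => Nat.le_nth fun hf => absurd hf hp) tendsto_id
  have hcount : Tendsto (Nat.count p) atTop atTop :=
    tendsto_atTop_atTop_of_monotone (Nat.count_monotone p) fun k =>
      ⟨Nat.nth p k + 1, by rw [Nat.count_nth_succ_of_infinite hp]; omega⟩
  refine ⟨fun h => ?_, fun h => ?_⟩
  · simpa only [Function.comp_def, Nat.count_nth_of_infinite hp] using h.comp hnth
  · have hprev : Tendsto (fun k : ℕ => (Nat.nth p (k - 1) : ℝ) / k) atTop (𝓝 L) := by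
      rw [← tendsto_add_atTop_iff_nat 1]
      simpa only [Nat.add_sub_cancel, Nat.cast_add, Nat.cast_one] using
        tendsto_div_add_one_iff.mpr h
    refine tendsto_of_tendsto_of_tendsto_of_le_of_le' (hprev.comp hcount) (h.comp hcount) ?_ ?_
    · filter_upwards [hcount.eventually_ge_atTop 1] with n hn
      have hlt : Nat.nth p (Nat.count p n - 1) < n := Nat.nth_lt_of_lt_count (by omega)
      simp only [Function.comp_apply]
      gcongr
    · filter_upwards [hcount.eventually_ge_atTop 1] with n hn
      have hle : n ≤ Nat.nth p (Nat.count p n) := Nat.le_nth_count hp n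
      simp only [Function.comp_apply]
      gcongr

lemma tendsto_count_div_iff_tendsto_nth_div (hp : {n | p n}.Infinite) {P : ℝ} (hP : P ≠ 0) :
    Tendsto (fun n : ℕ => (Nat.count p n : ℝ) / n) atTop (𝓝 P) ↔
      Tendsto (fun k : ℕ => (Nat.nth p k : ℝ) / k) atTop (𝓝 P⁻¹) := by
  rw [← tendsto_div_count_iff_tendsto_nth_div hp, ← tendsto_inv_iff₀ hP]
  simp only [inv_div]

end NthCount

lemma natCard_setOf_one_le_le_eq_count (q : ℕ → Prop) [DecidablePred q] (N : ℕ) :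
    Nat.card {n : ℕ | 1 ≤ n ∧ n ≤ N ∧ q n} = Nat.count (fun n => 1 ≤ n ∧ q n) (N + 1) := by
  have : {n : ℕ | 1 ≤ n ∧ n ≤ N ∧ q n} =
      ↑((Finset.range (N + 1)).filter fun n => 1 ≤ n ∧ q n) := by
    ext n
    simp only [Set.mem_ofPred_eq, Finset.coe_filter, Finset.mem_range, Nat.lt_succ_iff]
    tauto
  rw [this, Nat.card_coe_set_eq, Set.ncard_coe_finset, Nat.count_eq_card_filter_range]

lemma sum_Icc_one_tsub_pred {f : ℕ → ℕ} (hf : Monotone f) (N : ℕ) :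
    ∑ i ∈ Finset.Icc 1 N, ((f i - f (i - 1) : ℕ) : ℝ) = f N - f 0 := by
  induction N with
  | zero => simp
  | succ N ih =>
    rw [Finset.sum_Icc_succ_top (by omega), ih, Nat.add_sub_cancel, Nat.cast_sub (hf N.le_succ)]
    ring

lemma benfordP_pos {d : ℕ} (hd : 1 ≤ d) : 0 < benfordP d := by
  have : (0 : ℝ) < 1 / d := by positivity
  exact Real.logb_pos (by norm_num) (by linarith)

theorem benford_iff_average_waiting_time_general (a : ℕ → ℝ)
    (hinf : ∀ d : ℕ, 1 ≤ d → d ≤ 9 →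
      {n : ℕ | 1 ≤ n ∧ HasLeadingDigit (a n) d}.Infinite) :
    BenfordDistributed a ↔
      ∀ d : ℕ, 1 ≤ d → d ≤ 9 →
        Tendsto
          (fun N : ℕ => (∑ i ∈ Finset.Icc 1 N, (waitingTime a d i : ℝ)) / N)
          atTop (nhds (1 / benfordP d)) := by
  classical
  refine forall₃_congr fun d hd1 hd9 => ?_
  have hp := hinf d hd1 hd9
  simp only [natCard_setOf_one_le_le_eq_count, waitingTime,
    sum_Icc_one_tsub_pred (Nat.nth_monotone hp)]
  set p := fun n => 1 ≤ n ∧ HasLeadingDigit (a n) d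
  rw [tendsto_succ_div_iff (u := fun N => (Nat.count p N : ℝ)),
    tendsto_count_div_iff_tendsto_nth_div hp (benfordP_pos hd1).ne', tendsto_sub_const_div_iff,
    one_div]

/-- A sequence (with each leading digit occurring infinitely often) is Benford
distributed if and only if the average waiting time for each digit `d` equals `1/P(d)`. -/
theorem benford_iff_average_waiting_time (a : ℕ → ℝ)
    (hpos : ∀ n : ℕ, 1 ≤ n → 0 < a n)
    (hinf : ∀ d : ℕ, 1 ≤ d → d ≤ 9 →
      {n : ℕ | 1 ≤ n ∧ HasLeadingDigit (a n) d}.Infinite) :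
    BenfordDistributed a ↔
      ∀ d : ℕ, 1 ≤ d → d ≤ 9 →
        Tendsto
          (fun N : ℕ => (∑ i ∈ Finset.Icc 1 N, (waitingTime a d i : ℝ)) / N)
          atTop (nhds (1 / benfordP d)) :=
  benford_iff_average_waiting_time_general a hinf
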